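/- Let M = [[1-a, b],[c(2-a), bc+d]] with a ∈ (0,1), b, c ≥ 0, d ∈ (0,1). If a < 1 - d, a(1-d) > (7+2d)·bc, and a > bc, then the spectral radius of M satisfies ρ(M) < 1 - (a - bc)/2 < 1. -/

import Mathlib

/-!
The eigenvalues of a `2 × 2` matrix are the roots of `p x = x² - T x + D`, with `T` its trace and
`D` its determinant. A real root of `p` lies in `(-r, r)` as soon as `p (±r) > 0` and the vertex
`T / 2` lies in `(-r, r)`. For `r = 1 - (a - bc)/2` these three conditions are polynomial
inequalities in `a`, `bc`, `d`, and the hypotheses are what makes them hold.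
-/

theorem abs_lt_of_sq_sub_mul_add_eq_zero {K : Type*} [Field K] [LinearOrder K]
    [IsStrictOrderedRing K] {T D r x : K} (hx : x ^ 2 - T * x + D = 0) (hT : |T| < 2 * r)
    (hr_pos : 0 < r ^ 2 - T * r + D) (hr_neg : 0 < r ^ 2 + T * r + D) : |x| < r := by
  rw [abs_lt] at hT ⊢
  constructor
  · by_contra! hx_le
    -- `p x - p (-r) = (-r - x) (r + T - x)`
    nlinarith [mul_nonneg (by linarith : (0 : K) ≤ -r - x) (by linarith : (0 : K) ≤ r + T - x)]
  · by_contra! hx_ge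
    -- `p x - p r = (x - r) (x + r - T)`
    nlinarith [mul_nonneg (by linarith : (0 : K) ≤ x - r) (by linarith : (0 : K) ≤ x + r - T)]

theorem Matrix.sq_sub_trace_mul_add_det_eq_zero_of_mem_spectrum {K : Type*} [Field K]
    {M : Matrix (Fin 2) (Fin 2) K} {x : K} (hx : x ∈ spectrum K M) :
    x ^ 2 - M.trace * x + M.det = 0 := by
  simpa [Matrix.charpoly_fin_two] using (Matrix.mem_spectrum_iff_isRoot_charpoly.1 hx).eq_zero

theorem stmt15_general (a b c d : ℝ) (hb : 0 ≤ b) (hc : 0 ≤ c)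
    (hd0 : 0 < d)
    (h1 : a < 1 - d) (h2 : (7 + 2 * d) * (b * c) < a * (1 - d)) (h3 : b * c < a)
    (M : Matrix (Fin 2) (Fin 2) ℝ)
    (hM : M = !![1 - a, b; c * (2 - a), b * c + d]) :
    (∀ lam ∈ spectrum ℝ M, |lam| < 1 - (a - b * c) / 2) ∧ 1 - (a - b * c) / 2 < 1 := by
  have hbc : 0 ≤ b * c := mul_nonneg hb hc
  have ha : 0 < a := hbc.trans_lt h3
  have htrace : M.trace = 1 - a + b * c + d := by
    rw [hM, Matrix.trace_fin_two_of]; ring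
  have hdet : M.det = (1 - a) * d - b * c := by
    rw [hM, Matrix.det_fin_two_of]; ring
  set r := 1 - (a - b * c) / 2 with hr
  have hvertex : |1 - a + b * c + d| < 2 * r := by
    rw [abs_lt, hr]; constructor <;> linarith
  have hr_pos : 0 < r ^ 2 - (1 - a + b * c + d) * r + ((1 - a) * d - b * c) := by
    -- `4 p r = 2 a (1 - d) - 2 (3 + d) bc - (a - bc)²` and `(a - bc)² ≤ a² < a (1 - d)`
    rw [hr]
    nlinarith [mul_lt_mul_of_pos_left h1 ha, mul_nonneg hbc (sub_nonneg.2 h3.le)]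
  have hr_neg : 0 < r ^ 2 + (1 - a + b * c + d) * r + ((1 - a) * d - b * c) := by
    rw [hr]
    nlinarith [mul_lt_mul_of_pos_left h1 ha, mul_nonneg hbc (sub_nonneg.2 h3.le),
      mul_nonneg hd0.le hbc]
  refine ⟨fun lam hlam => ?_, by linarith⟩
  have hroot := Matrix.sq_sub_trace_mul_add_det_eq_zero_of_mem_spectrum hlam
  rw [htrace, hdet] at hroot
  exact abs_lt_of_sq_sub_mul_add_eq_zero hroot hvertex hr_pos hr_neg

theorem stmt15 (a b c d : ℝ) (ha0 : 0 < a) (ha1 : a < 1) (hb : 0 ≤ b) (hc : 0 ≤ c)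
    (hd0 : 0 < d) (hd1 : d < 1)
    (h1 : a < 1 - d) (h2 : (7 + 2 * d) * (b * c) < a * (1 - d)) (h3 : b * c < a)
    (M : Matrix (Fin 2) (Fin 2) ℝ)
    (hM : M = !![1 - a, b; c * (2 - a), b * c + d]) :
    (∀ lam ∈ spectrum ℝ M, |lam| < 1 - (a - b * c) / 2) ∧ 1 - (a - b * c) / 2 < 1 :=
  stmt15_general a b c d hb hc hd0 h1 h2 h3 M hM
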